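/- Let R be a commutative ring and let T be the set of 4 × 4 upper triangular matrices over R with all diagonal entries equal to 1 and with (1,2)-entry equal to 0 (indices written 1,2,3,4). Then T is closed under matrix multiplication, and the function f : T × T → R defined by f(X,Y) = X₂₃·Y₁₄ + X₁₃·Y₂₄ + X₁₃·X₂₃·Y₃₄ satisfies the 2-cocycle identity f(Y,Z) − f(X*Y, Z) + f(X, Y*Z) − f(X,Y) = 0 for all X, Y, Z ∈ T. -/
import Mathlib


/-- Unitriangular 4×4 matrices (1-indexed 1,2,3,4 = 0-indexed 0,1,2,3) with
vanishing (1,2)-entry (0-indexed (0,1)-entry). -/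
def UT12 {R : Type*} [CommRing R] (X : Matrix (Fin 4) (Fin 4) R) : Prop :=
  (∀ i j : Fin 4, j < i → X i j = 0) ∧ (∀ i : Fin 4, X i i = 1) ∧ X 0 1 = 0

/-- The factor set `f(X,Y) = X₂₃·Y₁₄ + X₁₃·Y₂₄ + X₁₃·X₂₃·Y₃₄` (1-indexed). -/
def f12 {R : Type*} [CommRing R] (X Y : Matrix (Fin 4) (Fin 4) R) : R :=
  X 1 2 * Y 0 3 + X 0 2 * Y 1 3 + X 0 2 * X 1 2 * Y 2 3

lemma UT12_entries {R : Type*} [CommRing R] {X : Matrix (Fin 4) (Fin 4) R}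
    (h : UT12 X) : X 1 0 = 0 ∧ X 2 0 = 0 ∧ X 2 1 = 0 ∧ X 3 0 = 0 ∧ X 3 1 = 0 ∧
      X 3 2 = 0 ∧ X 0 0 = 1 ∧ X 1 1 = 1 ∧ X 2 2 = 1 ∧ X 3 3 = 1 ∧ X 0 1 = 0 :=
  ⟨h.1 1 0 (by decide), h.1 2 0 (by decide), h.1 2 1 (by decide),
   h.1 3 0 (by decide), h.1 3 1 (by decide), h.1 3 2 (by decide),
   h.2.1 0, h.2.1 1, h.2.1 2, h.2.1 3, h.2.2⟩

/-- The set `T₁₂` is closed under multiplication, and `f12` satisfies the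
2-cocycle identity on it. -/
theorem UT12_closed_and_cocycle (R : Type*) [CommRing R] :
    (∀ X Y : Matrix (Fin 4) (Fin 4) R, UT12 X → UT12 Y → UT12 (X * Y)) ∧
    (∀ X Y Z : Matrix (Fin 4) (Fin 4) R, UT12 X → UT12 Y → UT12 Z →
      f12 Y Z - f12 (X * Y) Z + f12 X (Y * Z) - f12 X Y = 0) := by
  constructor
  · intro X Y hX hY
    obtain ⟨x10, x20, x21, x30, x31, x32, x00, x11, x22, x33, x01⟩ := UT12_entries hX
    obtain ⟨y10, y20, y21, y30, y31, y32, y00, y11, y22, y33, y01⟩ := UT12_entries hY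
    refine ⟨fun i j hij => ?_, fun i => ?_, ?_⟩
    · fin_cases i <;> fin_cases j <;> simp_all [Matrix.mul_apply, Fin.sum_univ_four]
    · fin_cases i <;> simp_all [Matrix.mul_apply, Fin.sum_univ_four]
    · simp_all [Matrix.mul_apply, Fin.sum_univ_four]
  · intro X Y Z hX hY hZ
    obtain ⟨x10, x20, x21, x30, x31, x32, x00, x11, x22, x33, x01⟩ := UT12_entries hX
    obtain ⟨y10, y20, y21, y30, y31, y32, y00, y11, y22, y33, y01⟩ := UT12_entries hY
    obtain ⟨z10, z20, z21, z30, z31, z32, z00, z11, z22, z33, z01⟩ := UT12_entries hZ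
    simp only [f12, Matrix.mul_apply, Fin.sum_univ_four, x10, x20, x21, x30, x31, x32,
      x00, x11, x22, x33, x01, y10, y20, y21, y30, y31, y32, y00, y11, y22, y33, y01,
      z10, z20, z21, z30, z31, z32, z00, z11, z22, z33, z01]
    ring
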